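/- arXiv:2402.16047 — 5 statements merged into one kernel-verified Lean document; each statement's English description precedes it below -/
import Mathlib

section
/- If a digraph D is a kernel-perfect orientation of a simple graph G and every vertex of D has outdegree at most k, then the list chromatic number (choosability) of G is at most k+1. -/
/-! Induction on the vertex set, following Bondy–Boppana–Siegel. Pick a colour `a` and a kernel `K`
of the subdigraph induced by the vertices whose list contains `a`. Colour `K` with `a`: it is
independent in `G`, since `D` orients every edge. Every other vertex that had `a` in its list
loses `a` but also loses an out-neighbour, namely one in `K`, so after deleting `K` every
remaining list is still longer than the remaining outdegree, and induction colours the rest. -/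

open SimpleGraph

variable {V : Type*}

/-- `S` is a kernel of the subdigraph of `D` induced on `A`: `S ⊆ A`, `S` is independent,
and every vertex of `A` outside `S` has an out-neighbor in `S`. -/
def IsKernelOn (D : V → V → Prop) (A S : Set V) : Prop :=
  S ⊆ A ∧ (∀ x ∈ S, ∀ y ∈ S, ¬ D x y) ∧ ∀ v ∈ A, v ∉ S → ∃ w ∈ S, D v w

/-- A digraph is kernel-perfect if every induced subdigraph has a kernel. -/
def KernelPerfect (D : V → V → Prop) : Prop :=
  ∀ A : Set V, ∃ S : Set V, IsKernelOn D A S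

/-- `D` is an orientation of the simple graph `G`. -/
def IsOrientation (G : SimpleGraph V) (D : V → V → Prop) : Prop :=
  (∀ x y, D x y → G.Adj x y) ∧ (∀ x y, G.Adj x y → (D x y ↔ ¬ D y x))

/-- `G` is `k`-choosable: every assignment of lists of size `k` admits a proper coloring
from the lists. -/
def Choosable (G : SimpleGraph V) (k : ℕ) : Prop :=
  ∀ L : V → Finset ℕ, (∀ v, (L v).card = k) →
    ∃ c : V → ℕ, (∀ v, c v ∈ L v) ∧ ∀ ⦃x y⦄, G.Adj x y → c x ≠ c y

/-- The list chromatic number (choice number) of `G`. -/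
noncomputable def choiceNumber (G : SimpleGraph V) : ℕ :=
  sInf {k | Choosable G k}

/-- The unitary Cayley graph on `ZMod n`: `x ~ y` iff `x - y` is a unit. -/
def unitaryCayley (n : ℕ) : SimpleGraph (ZMod n) where
  Adj x y := x ≠ y ∧ IsUnit (x - y)
  symm := by
    constructor
    rintro x y ⟨h1, h2⟩
    refine ⟨h1.symm, ?_⟩
    rw [show y - x = -(x - y) by ring]
    exact h2.neg
  loopless := by constructor; rintro x ⟨h, _⟩; exact h rfl

open Finset

variable {α : Type*} {G : SimpleGraph V} {D : V → V → Prop}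

lemma IsOrientation.not_adj (hD : IsOrientation G D) {x y : V} (hxy : ¬ D x y) (hyx : ¬ D y x) :
    ¬ G.Adj x y :=
  fun hadj => hxy ((hD.2 x y hadj).mpr hyx)

lemma IsKernelOn.nonempty {A S : Set V} (hS : IsKernelOn D A S) (hA : A.Nonempty) :
    S.Nonempty := by
  obtain ⟨v, hv⟩ := hA
  by_cases hvS : v ∈ S
  · exact ⟨v, hvS⟩
  · obtain ⟨w, hw, -⟩ := hS.2.2 v hv hvS
    exact ⟨w, hw⟩

lemma card_filter_sdiff_lt_card_erase [DecidableEq V] [DecidableRel D] [DecidableEq α]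
    {W K : Finset V} {v : V} {L : Finset α} {a : α} (hlt : #{w ∈ W | D v w} < #L)
    (hK : K ⊆ W) (hout : a ∈ L → ∃ w ∈ K, D v w) :
    #{w ∈ W \ K | D v w} < #(L.erase a) := by
  have hsub : {w ∈ W \ K | D v w} ⊆ {w ∈ W | D v w} := filter_subset_filter _ sdiff_subset
  by_cases ha : a ∈ L
  · obtain ⟨w, hwK, hvw⟩ := hout ha
    have hssub : {w ∈ W \ K | D v w} ⊂ {w ∈ W | D v w} :=
      ssubset_of_subset_of_ne hsub fun h => by
        have hw : w ∈ {w ∈ W | D v w} := mem_filter.mpr ⟨hK hwK, hvw⟩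
        rw [← h, mem_filter, mem_sdiff] at hw
        exact hw.1.2 hwK
    have := card_lt_card hssub
    rw [card_erase_of_mem ha]
    omega
  · rw [erase_eq_of_notMem ha]
    exact (card_le_card hsub).trans_lt hlt

theorem IsOrientation.exists_listColoring_of_kernelPerfect [DecidableRel D] [DecidableEq α]
    [Nonempty α]
    (hD : IsOrientation G D) (hkp : KernelPerfect D) (W : Finset V) (L : V → Finset α)
    (hL : ∀ v ∈ W, #{w ∈ W | D v w} < #(L v)) :
    ∃ c : V → α, (∀ v ∈ W, c v ∈ L v) ∧ ∀ x ∈ W, ∀ y ∈ W, G.Adj x y → c x ≠ c y := by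
  classical
  induction W using Finset.strongInduction generalizing L with
  | H W ih =>
  rcases W.eq_empty_or_nonempty with rfl | ⟨v₀, hv₀⟩
  · exact ⟨fun _ => Classical.arbitrary α, by simp, by simp⟩
  obtain ⟨a, ha⟩ : (L v₀).Nonempty := card_pos.mp ((Nat.zero_le _).trans_lt (hL v₀ hv₀))
  obtain ⟨S, hSA, hSind, hSout⟩ := hkp {v | v ∈ W ∧ a ∈ L v}
  obtain ⟨s, hs⟩ := IsKernelOn.nonempty ⟨hSA, hSind, hSout⟩ ⟨v₀, hv₀, ha⟩
  set K : Finset V := {v ∈ W | v ∈ S}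
  have hKS : ∀ {v}, v ∈ W → (v ∈ K ↔ v ∈ S) := fun hv => by simp [K, hv]
  obtain ⟨c', hc'L, hc'adj⟩ := ih (W \ K) (sdiff_ssubset (filter_subset _ W)
    ⟨s, (hKS (hSA hs).1).mpr hs⟩) (fun v => (L v).erase a) fun v hv => by
      obtain ⟨hvW, hvK⟩ := mem_sdiff.mp hv
      refine card_filter_sdiff_lt_card_erase (hL v hvW) (filter_subset _ W) fun hav => ?_
      obtain ⟨w, hwS, hvw⟩ := hSout v ⟨hvW, hav⟩ (mt (hKS hvW).mpr hvK)
      exact ⟨w, (hKS (hSA hwS).1).mpr hwS, hvw⟩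
  have hc'a : ∀ v ∈ W, v ∉ K → c' v ≠ a := fun v hv hvK =>
    ne_of_mem_erase (hc'L v (mem_sdiff.mpr ⟨hv, hvK⟩))
  refine ⟨fun v => if v ∈ K then a else c' v, fun v hv => ?_, fun x hx y hy hadj => ?_⟩
  · by_cases hvK : v ∈ K
    · simpa [hvK] using (hSA ((hKS hv).mp hvK)).2
    · simpa [hvK] using mem_of_mem_erase (hc'L v (mem_sdiff.mpr ⟨hv, hvK⟩))
  by_cases hxK : x ∈ K <;> by_cases hyK : y ∈ K <;> simp only [hxK, hyK, if_true, if_false]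
  · have hxS := (hKS hx).mp hxK
    have hyS := (hKS hy).mp hyK
    exact (hD.not_adj (hSind x hxS y hyS) (hSind y hyS x hxS) hadj).elim
  · exact (hc'a y hy hyK).symm
  · exact hc'a x hx hxK
  · exact hc'adj x (mem_sdiff.mpr ⟨hx, hxK⟩) y (mem_sdiff.mpr ⟨hy, hyK⟩) hadj

theorem IsOrientation.choosable_of_kernelPerfect [Fintype V] [DecidableRel D] {k : ℕ}
    (hD : IsOrientation G D) (hkp : KernelPerfect D) (hdeg : ∀ v, #{w | D v w} < k) :
    Choosable G k := fun L hL => by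
  obtain ⟨c, hcL, hcadj⟩ := hD.exists_listColoring_of_kernelPerfect hkp univ L
    fun v _ => hL v ▸ hdeg v
  exact ⟨c, fun v => hcL v (mem_univ v), fun x y => hcadj x (mem_univ x) y (mem_univ y)⟩

/-- a kernel-perfect orientation with outdegree at most `k`
gives `ch(G) ≤ k + 1`. -/
theorem stmt_0 [Fintype V] (G : SimpleGraph V) (D : V → V → Prop) (k : ℕ)
    (horient : IsOrientation G D) (hkp : KernelPerfect D)
    (hdeg : ∀ v : V, {w | D v w}.ncard ≤ k) :
    choiceNumber G ≤ k + 1 := by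
  classical
  refine Nat.sInf_le (horient.choosable_of_kernelPerfect hkp fun v => ?_)
  rw [← Set.ncard_coe_finset, coe_filter_univ]
  exact Nat.lt_succ_of_le (hdeg v)
end

section
/- Let n be an odd positive integer and let G be the unitary Cayley graph on Z/nZ (vertices are residues mod n, with x adjacent to y iff gcd(x-y, n) = 1). Then the clique number of G equals the least prime divisor p of n. -/
open SimpleGraph

variable {V : Type*}

/-!
Reduction modulo the least prime divisor `p` of `n` sends units to nonzero elements, so it is
injective on every clique, and a clique has at most `p` vertices. Conversely, `0, 1, …, p - 1`
form a clique, since their differences are nonzero and smaller than `p`, hence coprime to `n`.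
-/

open Finset

namespace unitaryCayley

variable {n : ℕ}

lemma injOn_of_isClique {R : Type*} [Ring R] [Nontrivial R] (f : ZMod n →+* R)
    {s : Set (ZMod n)} (hs : (unitaryCayley n).IsClique s) : Set.InjOn f s := by
  intro x hx y hy hxy
  by_contra hne
  have hunit : IsUnit (f (x - y)) := (hs hx hy hne).2.map f
  rw [map_sub, hxy, sub_self] at hunit
  exact not_isUnit_zero hunit

lemma card_le_of_isClique {p : ℕ} [Fact p.Prime] (hpn : p ∣ n) {s : Finset (ZMod n)}
    (hs : (unitaryCayley n).IsClique (s : Set (ZMod n))) : #s ≤ p := calc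
  #s = #(s.image (ZMod.castHom hpn (ZMod p))) :=
    (card_image_of_injOn (injOn_of_isClique _ hs)).symm
  _ ≤ Fintype.card (ZMod p) := card_le_univ _
  _ = p := ZMod.card p

lemma cliqueNum_le_minFac (hn : n ≠ 1) : (unitaryCayley n).cliqueNum ≤ n.minFac := by
  have : Fact n.minFac.Prime := ⟨Nat.minFac_prime hn⟩
  obtain ⟨s, hs⟩ := (unitaryCayley n).exists_isNClique_cliqueNum
  exact hs.card_eq ▸ card_le_of_isClique (Nat.minFac_dvd n) hs.isClique

lemma isUnit_natCast_of_lt_minFac {k : ℕ} (hk0 : k ≠ 0) (hk : k < n.minFac) :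
    IsUnit (k : ZMod n) :=
  (ZMod.isUnit_iff_coprime k n).2 (Nat.coprime_of_lt_minFac hk0 hk).symm

lemma adj_natCast_of_lt_minFac {i j : ℕ} (hij : i < j) (hj : j < n.minFac)
    (hne : (i : ZMod n) ≠ j) : (unitaryCayley n).Adj i j := by
  refine ⟨hne, ?_⟩
  have hunit := isUnit_natCast_of_lt_minFac (n := n) (Nat.sub_ne_zero_of_lt hij) (by omega)
  rw [Nat.cast_sub hij.le] at hunit
  simpa using hunit.neg

lemma isClique_image_range_minFac :
    (unitaryCayley n).IsClique ((range n.minFac).image (Nat.cast : ℕ → ZMod n) : Set (ZMod n)) := by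
  simp only [coe_image, coe_range]
  rintro _ ⟨i, hi, rfl⟩ _ ⟨j, hj, rfl⟩ hne
  rcases lt_or_gt_of_ne (ne_of_apply_ne _ hne) with hij | hji
  · exact adj_natCast_of_lt_minFac hij hj hne
  · exact (adj_natCast_of_lt_minFac hji hi hne.symm).symm

lemma minFac_le_cliqueNum [NeZero n] : n.minFac ≤ (unitaryCayley n).cliqueNum := by
  have hinj : Set.InjOn (Nat.cast : ℕ → ZMod n) (range n.minFac) := by
    intro i hi j hj hij
    have hn := Nat.minFac_le (Nat.pos_of_neZero n)
    simp only [coe_range, Set.mem_Iio] at hi hj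
    rwa [ZMod.natCast_eq_natCast_iff', Nat.mod_eq_of_lt (by omega),
      Nat.mod_eq_of_lt (by omega)] at hij
  simpa [card_image_of_injOn hinj] using
    (isClique_image_range_minFac (n := n)).card_le_cliqueNum

end unitaryCayley

theorem stmt_4_general (n : ℕ) (hn : 1 < n) :
    (unitaryCayley n).cliqueNum = n.minFac := by
  have : NeZero n := ⟨by omega⟩
  exact (unitaryCayley.cliqueNum_le_minFac (by omega)).antisymm unitaryCayley.minFac_le_cliqueNum

/-- for odd `n > 1`, the clique number of the unitary Cayley graph on
`ZMod n` is the least prime divisor of `n`. -/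
theorem stmt_4 (n : ℕ) (hn : 1 < n) (hodd : Odd n) :
    (unitaryCayley n).cliqueNum = n.minFac :=
  stmt_4_general n hn
end

section
/- Let n be odd with least prime divisor p. The clique number of the complement of the unitary Cayley graph on Z/nZ equals n/p. -/
open SimpleGraph

variable {V : Type*}

/-! The multiples of `p` form a clique of size `n / p` in the complement, since all their
differences lie in the proper ideal `(p)`. Conversely `0, 1, …, p - 1` have pairwise unit
differences, so the translates `S + i` of a clique `S` of the complement are pairwise disjoint,
whence `|S| * p ≤ n`. -/

open Finset

theorem card_mul_card_le_card_of_pairwise_isUnit_sub {R ι : Type*} [Ring R] [Nontrivial R]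
    [Fintype R] {s : Finset R} {t : Finset ι} {f : ι → R}
    (hs : (s : Set R).Pairwise fun x y => ¬IsUnit (x - y))
    (ht : (t : Set ι).Pairwise fun i j => IsUnit (f i - f j)) :
    #s * #t ≤ Fintype.card R := by
  rw [← card_product, ← card_univ]
  refine card_le_card_of_injOn (fun q => q.1 + f q.2) (fun _ _ => mem_coe.2 (mem_univ _)) ?_
  rintro ⟨x, i⟩ hxi ⟨y, j⟩ hyj hsum
  simp only [coe_product, Set.mem_prod, mem_coe] at hxi hyj hsum
  have hsub : x - y = f j - f i := by
    rw [sub_eq_sub_iff_add_eq_add, hsum, add_comm]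
  obtain rfl | hij := eq_or_ne i j
  · rw [sub_self, sub_eq_zero] at hsub
    rw [hsub]
  · have hu : IsUnit (x - y) := hsub ▸ ht hyj.2 hxi.2 hij.symm
    obtain rfl | hxy := eq_or_ne x y
    · exact absurd (sub_self x ▸ hu) not_isUnit_zero
    · exact absurd hu (hs hxi.1 hyj.1 hxy)

theorem pairwise_not_isUnit_sub_of_mem_zmultiples {R : Type*} [CommRing R] {a : R}
    (ha : ¬IsUnit a) :
    (AddSubgroup.zmultiples a : Set R).Pairwise fun x y => ¬IsUnit (x - y) := by
  intro x hx y hy _ hu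
  obtain ⟨k, hk⟩ := AddSubgroup.mem_zmultiples_iff.1 (sub_mem hx hy)
  rw [← hk, zsmul_eq_mul] at hu
  exact ha (isUnit_of_mul_isUnit_right hu)

namespace ZMod

theorem isUnit_natCast_sub_of_lt_minFac {n i j : ℕ} (hi : i < n.minFac) (hj : j < n.minFac)
    (hij : i ≠ j) : IsUnit ((i : ZMod n) - j) := by
  wlog h : i < j generalizing i j
  · rw [← neg_sub]
    exact (this hj hi hij.symm (by omega)).neg
  rw [← neg_sub, ← Nat.cast_sub h.le]
  exact ((isUnit_iff_coprime _ _).2 (Nat.coprime_of_lt_minFac (by omega) (by omega)).symm).neg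

theorem card_zmultiples_natCast_of_dvd {n d : ℕ} (hn : n ≠ 0) (hd : d ∣ n) :
    Nat.card (AddSubgroup.zmultiples (d : ZMod n)) = n / d := by
  rw [Nat.card_zmultiples, addOrderOf_coe d hn, Nat.gcd_eq_right hd]

end ZMod

theorem isClique_compl_unitaryCayley_iff {n : ℕ} {s : Set (ZMod n)} :
    (unitaryCayley n)ᶜ.IsClique s ↔ s.Pairwise fun x y => ¬IsUnit (x - y) := by
  simp +contextual [isClique_iff, Set.Pairwise, compl_adj, unitaryCayley]

theorem cliqueNum_compl_unitaryCayley_le {n : ℕ} (hn : 1 < n) :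
    ((unitaryCayley n)ᶜ).cliqueNum ≤ n / n.minFac := by
  have : Fact (1 < n) := ⟨hn⟩
  obtain ⟨s, hs⟩ := ((unitaryCayley n)ᶜ).exists_isNClique_cliqueNum
  rw [← hs.card_eq, Nat.le_div_iff_mul_le (Nat.minFac_pos n)]
  simpa using card_mul_card_le_card_of_pairwise_isUnit_sub
    (isClique_compl_unitaryCayley_iff.1 hs.isClique) (t := range n.minFac) (f := Nat.cast)
    fun i hi j hj hij => ZMod.isUnit_natCast_sub_of_lt_minFac (by simpa using hi)
      (by simpa using hj) hij

theorem div_le_cliqueNum_compl_unitaryCayley {n d : ℕ} (hn : n ≠ 0) (hd : d ∣ n)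
    (hd1 : d ≠ 1) :
    n / d ≤ ((unitaryCayley n)ᶜ).cliqueNum := by
  have : NeZero n := ⟨hn⟩
  have hdunit : ¬IsUnit (d : ZMod n) := fun h =>
    hd1 (((ZMod.isUnit_iff_coprime d n).1 h).eq_one_of_dvd hd)
  have hfin := (AddSubgroup.zmultiples (d : ZMod n) : Set (ZMod n)).toFinite
  rw [← ZMod.card_zmultiples_natCast_of_dvd hn hd, ← SetLike.coe_sort_coe,
    Nat.card_eq_card_finite_toFinset hfin]
  refine IsClique.card_le_cliqueNum (tc := ?_)
  rw [Set.Finite.coe_toFinset, isClique_compl_unitaryCayley_iff]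
  exact pairwise_not_isUnit_sub_of_mem_zmultiples hdunit

theorem stmt_7_general (n : ℕ) (hn : 1 < n) :
    ((unitaryCayley n)ᶜ).cliqueNum = n / n.minFac :=
  (cliqueNum_compl_unitaryCayley_le hn).antisymm <|
    div_le_cliqueNum_compl_unitaryCayley (by omega) n.minFac_dvd (Nat.minFac_prime hn.ne').ne_one

/-- the clique number of the complement of the unitary Cayley graph
on `ZMod n` (`n` odd) equals `n / p` where `p` is the least prime divisor of `n`. -/
theorem stmt_7 (n : ℕ) (hn : 1 < n) (hodd : Odd n) :
    ((unitaryCayley n)ᶜ).cliqueNum = n / n.minFac :=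
  stmt_7_general n hn
end

section
/- Let n be odd with least prime divisor p, and let G be the complement of the unitary Cayley graph on Z/nZ. Then the chromatic number of G equals n/p. -/
/-! Write `p = n.minFac`. Residues in a block `{k p, …, k p + p - 1}` differ by a positive
number smaller than every prime factor of `n`, hence by a unit, so coloring `x` by `x.val / p`
is proper on the complement and uses `n / p` colors. Conversely the `n / p` multiples of `p`
pairwise differ by a multiple of `p`, a non-unit, so they form a clique. -/

open SimpleGraph

variable {V : Type*}

lemma Nat.sub_lt_of_div_eq_div {a b p : ℕ} (hp : 0 < p) (h : a / p = b / p) : a - b < p := by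
  have := Nat.div_add_mod a p
  have := Nat.div_add_mod b p
  have := Nat.mod_lt a hp
  rw [h] at *
  omega

lemma ZMod.isUnit_natCast_of_lt_minFac {n d : ℕ} (hd : d ≠ 0) (hdn : d < n.minFac) :
    IsUnit (d : ZMod n) :=
  (ZMod.isUnit_iff_coprime d n).2 (Nat.coprime_of_lt_minFac hd hdn).symm

lemma ZMod.card_image_natCast_mul_range {n p : ℕ} (hp : 0 < p) (hpn : p ∣ n) :
    ((Finset.range (n / p)).image fun k => ((p * k : ℕ) : ZMod n)).card = n / p := by
  rw [Finset.card_image_of_injOn, Finset.card_range]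
  intro i hi j hj hij
  have hlt : ∀ k, k < n / p → p * k < n := fun k hk =>
    ((Nat.mul_lt_mul_left hp).2 hk).trans_eq (Nat.mul_div_cancel' hpn)
  simp only [Finset.coe_range, Set.mem_Iio] at hi hj
  rw [ZMod.natCast_eq_natCast_iff', Nat.mod_eq_of_lt (hlt i hi), Nat.mod_eq_of_lt (hlt j hj)]
    at hij
  exact Nat.eq_of_mul_eq_mul_left hp hij

namespace unitaryCayley

lemma compl_adj {n : ℕ} {x y : ZMod n} :
    (unitaryCayley n)ᶜ.Adj x y ↔ x ≠ y ∧ ¬IsUnit (x - y) := by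
  simp only [SimpleGraph.compl_adj, unitaryCayley]
  tauto

lemma colorable_compl_div_minFac (n : ℕ) [NeZero n] :
    (unitaryCayley n)ᶜ.Colorable (n / n.minFac) := by
  have hp : 0 < n.minFac := Nat.minFac_pos n
  refine ⟨Coloring.mk (fun x => ⟨x.val / n.minFac,
    Nat.div_lt_div_of_lt_of_dvd (Nat.minFac_dvd n) x.val_lt⟩) ?_⟩
  suffices h : ∀ x y : ZMod n, y.val < x.val → x.val / n.minFac = y.val / n.minFac →
      IsUnit (x - y) by
    intro x y hxy hcol
    rw [compl_adj] at hxy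
    have hval : x.val ≠ y.val := fun h => hxy.1 (ZMod.val_injective n h)
    rw [Fin.mk.injEq] at hcol
    rcases lt_or_gt_of_ne hval with hlt | hlt
    · exact hxy.2 (by simpa using (h y x hlt hcol.symm).neg)
    · exact hxy.2 (h x y hlt hcol)
  intro x y hlt hcol
  have hsub : ((x.val - y.val : ℕ) : ZMod n) = x - y := by
    rw [Nat.cast_sub hlt.le, ZMod.natCast_zmod_val, ZMod.natCast_zmod_val]
  rw [← hsub]
  exact ZMod.isUnit_natCast_of_lt_minFac (by omega) (Nat.sub_lt_of_div_eq_div hp hcol)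

lemma isClique_compl_multiples {n p : ℕ} (hp : p.Prime) (hpn : p ∣ n) :
    (unitaryCayley n)ᶜ.IsClique
      ((Finset.range (n / p)).image fun k => ((p * k : ℕ) : ZMod n) : Set (ZMod n)) := by
  have hp_nonunit : ¬IsUnit (p : ZMod n) := by
    rw [ZMod.isUnit_prime_iff_not_dvd hp]; exact not_not.2 hpn
  rw [Finset.coe_image]
  rintro _ ⟨i, -, rfl⟩ _ ⟨j, -, rfl⟩ hij
  refine compl_adj.2 ⟨hij, fun hu => hp_nonunit ?_⟩
  push_cast at hu
  rw [← mul_sub] at hu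
  exact isUnit_of_mul_isUnit_left hu

end unitaryCayley

theorem stmt_9_general (n : ℕ) (hn : 1 < n) :
    ((unitaryCayley n)ᶜ).chromaticNumber = ((n / n.minFac : ℕ) : ℕ∞) := by
  have : NeZero n := ⟨by omega⟩
  have hp : n.minFac.Prime := Nat.minFac_prime (by omega)
  refine le_antisymm (unitaryCayley.colorable_compl_div_minFac n).chromaticNumber_le ?_
  have := (unitaryCayley.isClique_compl_multiples hp (Nat.minFac_dvd n)).card_le_chromaticNumber
  rwa [ZMod.card_image_natCast_mul_range hp.pos (Nat.minFac_dvd n)] at this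

/-- the chromatic number of the complement of the unitary Cayley graph
on `ZMod n` (`n` odd) equals `n / p`. -/
theorem stmt_9 (n : ℕ) (hn : 1 < n) (hodd : Odd n) :
    ((unitaryCayley n)ᶜ).chromaticNumber = ((n / n.minFac : ℕ) : ℕ∞) :=
  stmt_9_general n hn
end

section
/- Let n = p^a or n = p^a q^b with p < q odd primes. Then the unitary Cayley graph on Z/nZ is a perfect graph. -/
/-!
Write `φ : ZMod n → ZMod p` and `ψ : ZMod n → ZMod q` for the reductions (with `q = p` when
`n = p ^ a`). Then `x - y` is a unit iff `φ x ≠ φ y` and `ψ x ≠ ψ y`, so any finite set `A` of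
vertices becomes a bipartite graph `T` on `φ '' A` and `ψ '' A` with one edge `(φ v, ψ v)` per
vertex `v`. A clique of the induced graph is a matching of `T`, while a vertex cover `C` of `T`
yields a proper coloring of the induced graph, since `v` may be colored by whichever of `φ v`,
`ψ v` lies in `C`. König's theorem (a minimum vertex cover of `T` is no larger than a maximum
matching) therefore gives `χ ≤ ω`.
-/

open SimpleGraph

variable {V : Type*}

/-- A graph is perfect if every induced subgraph has chromatic number equal to its
clique number. -/
def IsPerfect (G : SimpleGraph V) : Prop :=
  ∀ A : Set V,
    (SimpleGraph.induce A G).chromaticNumber = ((SimpleGraph.induce A G).cliqueNum : ℕ∞)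

open Finset

namespace Bipartite

/-- A bipartite graph with sides `α` and `β` is encoded by its edge set in `Finset (α × β)`. -/
def IsMatching {α β : Type*} (M : Finset (α × β)) : Prop :=
  Set.InjOn Prod.fst (M : Set (α × β)) ∧ Set.InjOn Prod.snd (M : Set (α × β))

variable {α β : Type*} [DecidableEq α] [DecidableEq β]

def nbhd (T : Finset (α × β)) (R : Finset α) : Finset β :=
  {e ∈ T | e.1 ∈ R}.image Prod.snd

lemma mem_nbhd {T : Finset (α × β)} {R : Finset α} {b : β} :
    b ∈ nbhd T R ↔ ∃ a ∈ R, (a, b) ∈ T := by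
  simp only [nbhd, mem_image, mem_filter, Prod.exists]
  grind

@[simp]
lemma nbhd_empty (T : Finset (α × β)) : nbhd T ∅ = ∅ := by
  simp [nbhd]

lemma card_le_card_biUnion_disjSum_of_le {T : Finset (α × β)} {d : ℕ}
    (hall : ∀ R ⊆ T.image Prod.fst, #R ≤ #(nbhd T R) + d) (s : Finset (T.image Prod.fst)) :
    #s ≤ #(s.biUnion fun a => (nbhd T {a.1}).disjSum (univ : Finset (Fin d))) := by
  rcases s.eq_empty_or_nonempty with rfl | ⟨a₀, ha₀⟩
  · simp
  set S := s.map (Function.Embedding.subtype _)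
  calc #s = #S := (card_map _).symm
    _ ≤ #(nbhd T S) + d := hall S fun a ha => by
        obtain ⟨a', -, rfl⟩ := mem_map.mp ha
        exact a'.2
    _ = #((nbhd T S).disjSum (univ : Finset (Fin d))) := by
        rw [card_disjSum, card_univ, Fintype.card_fin]
    _ ≤ _ := by
        refine card_le_card fun c hc => ?_
        rcases c with b | i
        · obtain ⟨a, ha, hab⟩ := mem_nbhd.mp (inl_mem_disjSum.mp hc)
          obtain ⟨a', ha', rfl⟩ := mem_map.mp ha
          exact mem_biUnion.mpr ⟨a', ha', inl_mem_disjSum.mpr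
            (mem_nbhd.mpr ⟨a', mem_singleton_self _, hab⟩)⟩
        · exact mem_biUnion.mpr ⟨a₀, ha₀, inr_mem_disjSum.mpr (mem_univ i)⟩

/-- Hall's theorem with deficiency `d`. -/
theorem exists_isMatching_card_add_of_le (T : Finset (α × β)) (d : ℕ)
    (hall : ∀ R ⊆ T.image Prod.fst, #R ≤ #(nbhd T R) + d) :
    ∃ M ⊆ T, IsMatching M ∧ #(T.image Prod.fst) ≤ #M + d := by
  set X := T.image Prod.fst
  -- Hall's theorem after adding `d` new right vertices joined to every left vertex.
  obtain ⟨f, hf_inj, hf_mem⟩ := (all_card_le_biUnion_card_iff_exists_injective _).mp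
    (card_le_card_biUnion_disjSum_of_le hall)
  let M := {e ∈ T | ∃ h : e.1 ∈ X, f ⟨e.1, h⟩ = .inl e.2}
  have mem_M {e : α × β} (he : e ∈ M) : ∃ h : e.1 ∈ X, f ⟨e.1, h⟩ = .inl e.2 :=
    (mem_filter.mp he).2
  refine ⟨M, filter_subset _ _, ⟨fun e he e' he' h => ?_, fun e he e' he' h => ?_⟩, ?_⟩
  · obtain ⟨hX, hfe⟩ := mem_M he
    obtain ⟨hX', hfe'⟩ := mem_M he'
    have : f ⟨e.1, hX⟩ = f ⟨e'.1, hX'⟩ := by simp only [h]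
    exact Prod.ext h (Sum.inl_injective (hfe.symm.trans (this.trans hfe')))
  · obtain ⟨hX, hfe⟩ := mem_M he
    obtain ⟨hX', hfe'⟩ := mem_M he'
    have : f ⟨e.1, hX⟩ = f ⟨e'.1, hX'⟩ := by rw [hfe, hfe', h]
    exact Prod.ext (congrArg Subtype.val (hf_inj this)) h
  · calc #X = #(univ.image f) := by
          rw [card_image_of_injective _ hf_inj, card_univ, Fintype.card_coe]
      _ ≤ #((M.image Prod.snd).disjSum (univ : Finset (Fin d))) := by
          refine card_le_card fun c hc => ?_
          obtain ⟨a, -, rfl⟩ := mem_image.mp hc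
          rcases hfa : f a with b | i
          · have hb := hfa ▸ hf_mem a
            obtain ⟨a', ha', hab⟩ := mem_nbhd.mp (inl_mem_disjSum.mp hb)
            rw [mem_singleton.mp ha'] at hab
            exact inl_mem_disjSum.mpr (mem_image.mpr
              ⟨(a.1, b), mem_filter.mpr ⟨hab, a.2, hfa⟩, rfl⟩)
          · exact inr_mem_disjSum.mpr (mem_univ i)
      _ ≤ #M + d := by
          rw [card_disjSum, card_univ, Fintype.card_fin]
          exact Nat.add_le_add_right card_image_le d

/-- König's theorem. -/
theorem exists_cover_card_le_matching (T : Finset (α × β)) :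
    ∃ (C₁ : Finset α) (C₂ : Finset β) (M : Finset (α × β)),
      (∀ e ∈ T, e.1 ∈ C₁ ∨ e.2 ∈ C₂) ∧ M ⊆ T ∧ IsMatching M ∧ #C₁ + #C₂ ≤ #M := by
  set X := T.image Prod.fst
  obtain ⟨R, hRX, hRmax⟩ := X.powerset.exists_max_image
    (fun R => (#R : ℤ) - #(nbhd T R)) ⟨∅, empty_mem_powerset _⟩
  rw [mem_powerset] at hRX
  have hR₀ := hRmax ∅ (empty_mem_powerset _)
  simp only [nbhd_empty, card_empty, CharP.cast_eq_zero, sub_zero] at hR₀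
  have hdef : ∀ R' ⊆ X, #R' ≤ #(nbhd T R') + (#R - #(nbhd T R)) := fun R' hR' => by
    have := hRmax R' (mem_powerset.mpr hR')
    omega
  obtain ⟨M, hMT, hM, hcard⟩ := exists_isMatching_card_add_of_le T _ hdef
  refine ⟨X \ R, nbhd T R, M, fun e he => ?_, hMT, hM, ?_⟩
  · by_cases h : e.1 ∈ R
    · exact .inr (mem_nbhd.mpr ⟨e.1, h, he⟩)
    · exact .inl (mem_sdiff.mpr ⟨mem_image_of_mem _ he, h⟩)
  · rw [card_sdiff_of_subset hRX]
    have : #R ≤ #X := card_le_card hRX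
    change #X ≤ _ at hcard
    omega

end Bipartite

open Bipartite

namespace SimpleGraph

variable {α β : Type*}

theorem colorable_of_cover {G : SimpleGraph V} (φ : V → α) (ψ : V → β)
    (hadj : ∀ x y, G.Adj x y → φ x ≠ φ y ∧ ψ x ≠ ψ y) (C₁ : Finset α) (C₂ : Finset β)
    (hC : ∀ v, φ v ∈ C₁ ∨ ψ v ∈ C₂) : G.Colorable (#C₁ + #C₂) := by
  classical
  let col : V → C₁.disjSum C₂ := fun v =>
    if h : φ v ∈ C₁ then ⟨.inl (φ v), inl_mem_disjSum.mpr h⟩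
    else ⟨.inr (ψ v), inr_mem_disjSum.mpr ((hC v).resolve_left h)⟩
  have hcol : G.Colorable (Fintype.card (C₁.disjSum C₂)) :=
    (Coloring.mk col fun {u v} huv heq => by
      obtain ⟨hφ, hψ⟩ := hadj u v huv
      simp only [col] at heq
      split_ifs at heq <;> simp_all).colorable
  rwa [Fintype.card_coe, card_disjSum] at hcol

theorem exists_isNClique_of_isMatching [Fintype V] [DecidableEq α] [DecidableEq β]
    {G : SimpleGraph V} (φ : V → α) (ψ : V → β)
    (hadj : ∀ x y, φ x ≠ φ y → ψ x ≠ ψ y → G.Adj x y) {M : Finset (α × β)}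
    (hMT : M ⊆ univ.image fun v => (φ v, ψ v)) (hM : IsMatching M) :
    ∃ K, G.IsNClique #M K := by
  obtain ⟨K, -, hinj, rfl⟩ := exists_subset_injOn_image_eq_of_surjOn (Set.univ : Set V) M
    (fun e he => by simpa using hMT he)
  refine ⟨K, ⟨fun u hu v hv huv => hadj u v (fun h => ?_) (fun h => ?_), ?_⟩⟩
  · exact huv (hinj hu hv (hM.1 (mem_image_of_mem _ hu) (mem_image_of_mem _ hv) h))
  · exact huv (hinj hu hv (hM.2 (mem_image_of_mem _ hu) (mem_image_of_mem _ hv) h))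
  · exact (card_image_of_injOn hinj).symm

theorem chromaticNumber_eq_cliqueNum_of_adj_iff [Finite V] {G : SimpleGraph V}
    (φ : V → α) (ψ : V → β) (hadj : ∀ x y, G.Adj x y ↔ φ x ≠ φ y ∧ ψ x ≠ ψ y) :
    G.chromaticNumber = G.cliqueNum := by
  classical
  have := Fintype.ofFinite V
  obtain ⟨C₁, C₂, M, hcover, hMT, hM, hcard⟩ :=
    exists_cover_card_le_matching (univ.image fun v => (φ v, ψ v))
  obtain ⟨K, hK⟩ := exists_isNClique_of_isMatching φ ψ
    (fun x y hφ hψ => (hadj x y).mpr ⟨hφ, hψ⟩) hMT hM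
  have hC : ∀ v, φ v ∈ C₁ ∨ ψ v ∈ C₂ := fun v => hcover _ (mem_image_of_mem _ (mem_univ v))
  refine le_antisymm ?_ G.cliqueNum_le_chromaticNumber
  calc G.chromaticNumber ≤ (#C₁ + #C₂ : ℕ) :=
        (colorable_of_cover φ ψ (fun x y => (hadj x y).mp) C₁ C₂ hC).chromaticNumber_le
    _ ≤ #M := by exact_mod_cast hcard
    _ ≤ G.cliqueNum := by
        rw [← hK.card_eq]
        exact_mod_cast hK.isClique.card_le_cliqueNum

end SimpleGraph

theorem isPerfect_of_adj_iff {α β : Type*} [Finite V] {G : SimpleGraph V} (φ : V → α)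
    (ψ : V → β) (hadj : ∀ x y, G.Adj x y ↔ φ x ≠ φ y ∧ ψ x ≠ ψ y) : IsPerfect G := fun A =>
  SimpleGraph.chromaticNumber_eq_cliqueNum_of_adj_iff (fun v : A => φ v) (fun v => ψ v)
    fun x y => hadj x y

theorem isPerfect_unitaryCayley_of_isUnit_iff {n : ℕ} [NeZero n] {R S : Type*} [Ring R]
    [Ring S] (φ : ZMod n →+* R) (ψ : ZMod n →+* S)
    (hunit : ∀ u, IsUnit u ↔ φ u ≠ 0 ∧ ψ u ≠ 0) : IsPerfect (unitaryCayley n) :=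
  isPerfect_of_adj_iff φ ψ fun x y => by
    change x ≠ y ∧ IsUnit (x - y) ↔ _
    rw [hunit, map_sub, map_sub, sub_ne_zero, sub_ne_zero]
    exact ⟨And.right, fun h => ⟨fun hxy => h.1 (congrArg φ hxy), h⟩⟩

lemma ZMod.isUnit_iff_coprime_val {n : ℕ} [NeZero n] (u : ZMod n) :
    IsUnit u ↔ u.val.Coprime n := by
  rw [← ZMod.isUnit_iff_coprime, ZMod.natCast_zmod_val]

lemma ZMod.cast_ne_zero_iff_coprime_val {n p : ℕ} [NeZero n] (hp : p.Prime) (u : ZMod n) :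
    (ZMod.cast u : ZMod p) ≠ 0 ↔ u.val.Coprime p := by
  rw [ZMod.cast_eq_val, Ne, ZMod.natCast_eq_zero_iff, Nat.coprime_comm, hp.coprime_iff_not_dvd]

/-- if `n = p^a` or `n = p^a * q^b` with `p < q` odd primes, then the
unitary Cayley graph on `ZMod n` is perfect. -/
theorem stmt_13 (n : ℕ)
    (h : (∃ p a : ℕ, p.Prime ∧ Odd p ∧ 0 < a ∧ n = p ^ a) ∨
         (∃ p q a b : ℕ, p.Prime ∧ q.Prime ∧ Odd p ∧ Odd q ∧ p < q ∧
            0 < a ∧ 0 < b ∧ n = p ^ a * q ^ b)) :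
    IsPerfect (unitaryCayley n) := by
  rcases h with ⟨p, a, hp, -, ha, rfl⟩ | ⟨p, q, a, b, hp, hq, -, -, -, ha, hb, rfl⟩
  · have : NeZero (p ^ a) := ⟨pow_ne_zero a hp.ne_zero⟩
    let φ := ZMod.castHom (dvd_pow_self p ha.ne') (ZMod p)
    refine isPerfect_unitaryCayley_of_isUnit_iff φ φ fun u => ?_
    rw [and_self, ZMod.castHom_apply, ZMod.isUnit_iff_coprime_val,
      ZMod.cast_ne_zero_iff_coprime_val hp, Nat.coprime_pow_right_iff ha]
  · have : NeZero (p ^ a * q ^ b) :=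
      ⟨mul_ne_zero (pow_ne_zero a hp.ne_zero) (pow_ne_zero b hq.ne_zero)⟩
    let φ := ZMod.castHom ((dvd_pow_self p ha.ne').mul_right (q ^ b)) (ZMod p)
    let ψ := ZMod.castHom ((dvd_pow_self q hb.ne').mul_left (p ^ a)) (ZMod q)
    refine isPerfect_unitaryCayley_of_isUnit_iff φ ψ fun u => ?_
    rw [ZMod.castHom_apply, ZMod.castHom_apply, ZMod.isUnit_iff_coprime_val,
      ZMod.cast_ne_zero_iff_coprime_val hp, ZMod.cast_ne_zero_iff_coprime_val hq,
      Nat.coprime_mul_iff_right, Nat.coprime_pow_right_iff ha, Nat.coprime_pow_right_iff hb]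
end
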